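/- Let d ≥ 1, let val : Finset(Fin d) → ℝ be a cooperation game with val(∅) = 0, and let (c_v), indexed by nonempty v ⊆ Fin d, satisfy val(u) = Σ_{∅ ≠ v ⊆ u} c_v for all u. Then for every nonempty coalition u ⊆ Fin d, the Shapley-Owen value satisfies Sh_u(val) = Σ_{v : u ⊆ v} c_v/(|v| − |u| + 1). -/

import Mathlib

/-!
The Shapley-Owen value is linear in the game, and the hypothesis writes `val` as the
combination `∑ c_t ζ_t` of the unanimity games `ζ_t s = [t ⊆ s]`. For `ζ_t`, the alternating
sum over `w ⊆ u` is the indicator of `u ⊆ t ⊆ u ∪ v`, so only the coalitions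
`t \ u ⊆ v ⊆ uᶜ` survive, and with `n = |uᶜ|`, `m = |t \ u|` their weights add up to
`∑_j C(n-m, j) / C(n, m+j) = C(n+1, m+1) / C(n, m) = (n+1)/(m+1)` by the hockey-stick identity.
-/

/-- The Shapley-Owen value of a nonempty coalition `u` in the cooperation game `val`. -/
noncomputable def ShOwen {d : ℕ} (val : Finset (Fin d) → ℝ) (u : Finset (Fin d)) : ℝ :=
  ((d : ℝ) - u.card + 1)⁻¹ *
    ∑ v ∈ (uᶜ : Finset (Fin d)).powerset,
      (((d - u.card).choose v.card : ℝ))⁻¹ *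
        ∑ w ∈ u.powerset, (-1 : ℝ) ^ (u.card - w.card) * val (v ∪ w)

open Finset

namespace Finset

variable {α : Type*} [DecidableEq α] {s t : Finset α}

theorem sum_Icc_apply_card {M : Type*} [AddCommMonoid M] (h : s ⊆ t) (f : ℕ → M) :
    ∑ v ∈ Icc s t, f #v = ∑ j ∈ range (#t - #s + 1), (#t - #s).choose j • f (#s + j) := by
  have hinj : Set.InjOn (s ∪ ·) (t \ s).powerset := fun x hx y hy hxy => by
    have hx : Disjoint s x := disjoint_of_subset_right (mem_powerset.1 hx) disjoint_sdiff
    have hy : Disjoint s y := disjoint_of_subset_right (mem_powerset.1 hy) disjoint_sdiff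
    simpa [union_sdiff_left, sdiff_eq_self_of_disjoint hx.symm,
      sdiff_eq_self_of_disjoint hy.symm] using congrArg (· \ s) hxy
  rw [Icc_eq_image_powerset h, sum_image hinj, ← card_sdiff_of_subset h,
    ← sum_powerset_apply_card (fun j => f (#s + j))]
  refine sum_congr rfl fun x hx => ?_
  rw [card_union_of_disjoint (disjoint_of_subset_right (mem_powerset.1 hx) disjoint_sdiff)]

theorem sum_Icc_neg_one_pow_card_sub {R : Type*} [CommRing R] (h : s ⊆ t) :
    ∑ v ∈ Icc s t, (-1 : R) ^ (#t - #v) = if s = t then 1 else 0 := by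
  have hst : s = t ↔ #t - #s = 0 := by
    rw [Nat.sub_eq_zero_iff_le]
    exact ⟨fun e => e ▸ le_rfl, eq_of_subset_of_card_le h⟩
  rw [sum_Icc_apply_card h (fun k => (-1 : R) ^ (#t - k)), if_congr hst rfl rfl, ← zero_pow_eq,
    ← add_neg_cancel (1 : R), add_pow]
  refine sum_congr rfl fun j _ => ?_
  rw [nsmul_eq_mul, Nat.sub_add_eq, one_pow, one_mul, mul_comm]

theorem sum_Icc_inv_choose_card {K : Type*} [Field K] [CharZero K] (h : s ⊆ t) :
    ∑ v ∈ Icc s t, (((#t).choose #v : K))⁻¹ = (#t + 1) / (#s + 1) := by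
  have hst : #s ≤ #t := card_le_card h
  have h2 : ((#t).choose #s : K) ≠ 0 := by exact_mod_cast (Nat.choose_pos hst).ne'
  have hterm : ∀ j ∈ range (#t - #s + 1),
      (#t - #s).choose j • (((#t).choose (#s + j) : K))⁻¹
        = ((#t).choose #s : K)⁻¹ * ((#s + j).choose #s : K) := by
    intro j hj
    have hj : #s + j ≤ #t := by rw [mem_range] at hj; omega
    have key := Nat.choose_mul (n := #t) (Nat.le_add_right #s j)
    rw [Nat.add_sub_cancel_left] at key
    have h1 : ((#t).choose (#s + j) : K) ≠ 0 := by exact_mod_cast (Nat.choose_pos hj).ne'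
    rw [nsmul_eq_mul]
    field_simp
    rw [mul_comm]
    exact_mod_cast key.symm
  have hhockey : ∑ j ∈ range (#t - #s + 1), (#s + j).choose #s = (#t + 1).choose (#s + 1) := by
    rw [← Nat.sum_Icc_choose, ← Ico_add_one_right_eq_Icc, sum_Ico_eq_sum_range,
      Nat.sub_add_comm hst]
  have hpascal := Nat.add_one_mul_choose_eq #t #s
  rw [sum_Icc_apply_card h (fun k => (((#t).choose k : K))⁻¹), sum_congr rfl hterm, ← mul_sum]
  rw_mod_cast [hhockey]
  field_simp
  rw [mul_comm (((#t).choose #s : ℕ) : K)]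
  exact_mod_cast hpascal.symm

end Finset

def unanimityGame {α : Type*} [DecidableEq α] (t s : Finset α) : ℝ := if t ⊆ s then 1 else 0

theorem sum_powerset_neg_one_pow_mul_unanimityGame {α : Type*} [DecidableEq α]
    {u v : Finset α} (huv : Disjoint u v) (t : Finset α) :
    ∑ w ∈ u.powerset, (-1 : ℝ) ^ (#u - #w) * unanimityGame t (v ∪ w)
      = if u ⊆ t ∧ t \ u ⊆ v then 1 else 0 := by
  have hsplit : ∀ w ∈ u.powerset, t ⊆ v ∪ w ↔ t \ u ⊆ v ∧ t ∩ u ⊆ w := by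
    intro w hw
    rw [mem_powerset] at hw
    constructor
    · intro htw
      refine ⟨fun x hx => ?_, fun x hx => ?_⟩
      · rw [mem_sdiff] at hx
        exact (mem_union.1 (htw hx.1)).resolve_right fun hxw => hx.2 (hw hxw)
      · rw [mem_inter] at hx
        exact (mem_union.1 (htw hx.1)).resolve_left
          fun hxv => disjoint_left.1 huv hx.2 hxv
    · rintro ⟨htv, htw⟩ x hxt
      by_cases hxu : x ∈ u
      · exact mem_union_right _ (htw (mem_inter.2 ⟨hxt, hxu⟩))
      · exact mem_union_left _ (htv (mem_sdiff.2 ⟨hxt, hxu⟩))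
  simp only [unanimityGame, mul_ite, mul_one, mul_zero]
  rw [sum_congr rfl fun w hw => if_congr (hsplit w hw) rfl rfl]
  by_cases htv : t \ u ⊆ v
  · simp only [htv, true_and, and_true]
    rw [← sum_filter, ← Icc_eq_filter_powerset, sum_Icc_neg_one_pow_card_sub inter_subset_right]
    exact if_congr inter_eq_right rfl rfl
  · simp [htv]

theorem ShOwen_sum {d : ℕ} {ι : Type*} (T : Finset ι) (c : ι → ℝ)
    (g : ι → Finset (Fin d) → ℝ) (u : Finset (Fin d)) :
    ShOwen (fun s => ∑ t ∈ T, c t * g t s) u = ∑ t ∈ T, c t * ShOwen (g t) u := by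
  simp only [ShOwen, mul_sum]
  conv_rhs => rw [sum_comm]
  refine sum_congr rfl fun v _ => ?_
  conv_rhs => rw [sum_comm]
  exact sum_congr rfl fun w _ => sum_congr rfl fun t _ => by ring

theorem ShOwen_unanimityGame {d : ℕ} (t u : Finset (Fin d)) :
    ShOwen (unanimityGame t) u = if u ⊆ t then ((#t : ℝ) - #u + 1)⁻¹ else 0 := by
  have hinner : ∀ v ∈ (uᶜ : Finset (Fin d)).powerset,
      ∑ w ∈ u.powerset, (-1 : ℝ) ^ (#u - #w) * unanimityGame t (v ∪ w)
        = if u ⊆ t ∧ t \ u ⊆ v then 1 else 0 := fun v hv =>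
    sum_powerset_neg_one_pow_mul_unanimityGame
      (subset_compl_iff_disjoint_right.1 (mem_powerset.1 hv)).symm t
  rw [ShOwen, sum_congr rfl fun v hv => by rw [hinner v hv]]
  split_ifs with hut
  · have hcompl : #(uᶜ : Finset (Fin d)) = d - #u := by simp [card_compl]
    have hsub : t \ u ⊆ uᶜ := fun x hx => mem_compl.2 (mem_sdiff.1 hx).2
    simp only [hut, true_and, mul_ite, mul_one, mul_zero]
    rw [← sum_filter, ← Icc_eq_filter_powerset, ← hcompl, sum_Icc_inv_choose_card hsub, hcompl,
      card_sdiff_of_subset hut]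
    have hud : #u ≤ d := by simpa using card_le_univ u
    have htu : #u ≤ #t := card_le_card hut
    have hpos : (0 : ℝ) < d - #u + 1 := by
      have : (#u : ℝ) ≤ d := by exact_mod_cast hud
      linarith
    push_cast [hud, htu]
    rw [div_eq_mul_inv, inv_mul_cancel_left₀ hpos.ne']
  · simp [hut]

theorem shapleyOwen_eq_sum_dividends_general
    {d : ℕ} (val : Finset (Fin d) → ℝ)
    (c : Finset (Fin d) → ℝ)
    (hc : ∀ u : Finset (Fin d), val u = ∑ v ∈ u.powerset.erase ∅, c v)
    (u : Finset (Fin d)) (hu : u.Nonempty) :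
    ShOwen val u
      = ∑ v ∈ Finset.univ.powerset.filter (fun v : Finset (Fin d) => u ⊆ v),
          c v / ((v.card : ℝ) - u.card + 1) := by
  have hval : val = fun s => ∑ t ∈ univ.powerset.erase ∅, c t * unanimityGame t s := by
    funext s
    simp only [hc s, unanimityGame, mul_ite, mul_one, mul_zero]
    rw [← sum_filter]
    congr 1
    ext t
    simp
  have hsupsets : (univ.powerset.erase ∅).filter (fun t => u ⊆ t)
      = univ.powerset.filter (fun t : Finset (Fin d) => u ⊆ t) := by
    ext t
    simp only [mem_filter, mem_erase, and_congr_left_iff]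
    exact fun hut => and_iff_right (hu.mono hut).ne_empty
  simp only [hval, ShOwen_sum, ShOwen_unanimityGame, mul_ite, mul_zero, ← div_eq_mul_inv]
  rw [← sum_filter, hsupsets]

/-- If `val(u) = Σ_{∅ ≠ v ⊆ u} c_v` (Harsanyi dividends), then the
Shapley-Owen value of a nonempty coalition `u` is `Σ_{v ⊇ u} c_v/(|v| − |u| + 1)`. -/
theorem shapleyOwen_eq_sum_dividends
    {d : ℕ} (hd : 1 ≤ d) (val : Finset (Fin d) → ℝ) (h0 : val ∅ = 0)
    (c : Finset (Fin d) → ℝ)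
    (hc : ∀ u : Finset (Fin d), val u = ∑ v ∈ u.powerset.erase ∅, c v)
    (u : Finset (Fin d)) (hu : u.Nonempty) :
    ShOwen val u
      = ∑ v ∈ Finset.univ.powerset.filter (fun v : Finset (Fin d) => u ⊆ v),
          c v / ((v.card : ℝ) - u.card + 1) :=
  shapleyOwen_eq_sum_dividends_general val c hc u hu
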